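/- arXiv:2105.06991 — 4 statements merged into one kernel-verified Lean document; each statement's English description precedes it below -/
import Mathlib

section
/- Let α, β > -1, |α-β| < |v| < α+β+2, and n ∈ ℕ. The diagonal matrix Nₙ = (n! v B(α+n+2, β+n+2)/( (α+β+n+3)ₙ )) · diag( ((α+v+β+2)(α-v+β+2n+4)) / ((α+v-β)(α+v+β+2n+2)), -((α-v+β+2)(α+v+β+2n+4)) / ((α-v-β)(α-v+β+2n+2)) ) is positive definite (both diagonal entries are strictly positive). -/
/-- The Euler Beta function `B(x,y) = ∫₀¹ t^{x-1} (1-t)^{y-1} dt`. -/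
noncomputable def betaFn (x y : ℝ) : ℝ :=
  ∫ t in (0 : ℝ)..1, t ^ (x - 1) * (1 - t) ^ (y - 1)

/-- The Pochhammer symbol `(a)ₙ = a(a+1)⋯(a+n-1)` for real `a`. -/
noncomputable def poch (a : ℝ) (n : ℕ) : ℝ :=
  ∏ i ∈ Finset.range n, (a + (i : ℝ))

lemma betaFn_pos {x y : ℝ} (hx : 1 < x) (hy : 1 < y) : 0 < betaFn x y := by
  have hcx : Continuous fun t : ℝ => t ^ (x - 1) := by
    rw [continuous_iff_continuousAt]
    intro t
    exact Real.continuousAt_rpow_const t (x - 1) (Or.inr (by linarith))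
  have hcy : Continuous fun t : ℝ => (1 - t) ^ (y - 1) := by
    rw [continuous_iff_continuousAt]
    intro t
    exact (Real.continuousAt_rpow_const (1 - t) (y - 1)
      (Or.inr (by linarith))).comp (by fun_prop)
  have hc : Continuous fun t : ℝ => t ^ (x - 1) * (1 - t) ^ (y - 1) := hcx.mul hcy
  apply intervalIntegral.intervalIntegral_pos_of_pos_on
    (hc.intervalIntegrable 0 1)
  · intro t ht
    exact mul_pos (Real.rpow_pos_of_pos ht.1 _)
      (Real.rpow_pos_of_pos (by linarith [ht.2]) _)
  · norm_num

theorem stmt7 (α β v : ℝ) (hα : -1 < α) (hβ : -1 < β)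
    (h1 : |α - β| < |v|) (h2 : |v| < α + β + 2) (n : ℕ) :
    0 < ((n.factorial : ℝ) * v * betaFn (α + (n : ℝ) + 2) (β + (n : ℝ) + 2) /
          poch (α + β + (n : ℝ) + 3) n) *
        ((α + v + β + 2) * (α - v + β + 2 * (n : ℝ) + 4) /
          ((α + v - β) * (α + v + β + 2 * (n : ℝ) + 2))) ∧
    0 < ((n.factorial : ℝ) * v * betaFn (α + (n : ℝ) + 2) (β + (n : ℝ) + 2) /
          poch (α + β + (n : ℝ) + 3) n) *
        (-((α - v + β + 2) * (α + v + β + 2 * (n : ℝ) + 4) /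
          ((α - v - β) * (α - v + β + 2 * (n : ℝ) + 2)))) := by
  have hn : (0 : ℝ) ≤ (n : ℝ) := Nat.cast_nonneg n
  have hB : 0 < betaFn (α + (n : ℝ) + 2) (β + (n : ℝ) + 2) :=
    betaFn_pos (by linarith) (by linarith)
  have habsv : 0 ≤ |v| := abs_nonneg v
  have hP : 0 < poch (α + β + (n : ℝ) + 3) n := by
    apply Finset.prod_pos
    intro i _
    have : (0 : ℝ) ≤ (i : ℝ) := Nat.cast_nonneg i
    linarith [abs_nonneg v]
  have hF : (0 : ℝ) < (n.factorial : ℝ) := by positivity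
  have hvne : v ≠ 0 := by
    intro h; rw [h] at h1; simp at h1; linarith [abs_nonneg (α - β), h1]
  rcases lt_or_gt_of_ne hvne with hv | hv
  · -- v < 0 : |v| = -v
    have habs : |v| = -v := abs_of_neg hv
    rw [habs] at h2
    have hab' := abs_lt.mp (h1.trans_eq habs)
    have hab : α - β < -v ∧ β - α < -v := ⟨hab'.2, by linarith [hab'.1]⟩
    have hC : (n.factorial : ℝ) * v * betaFn (α + (n : ℝ) + 2) (β + (n : ℝ) + 2) /
        poch (α + β + (n : ℝ) + 3) n < 0 :=
      div_neg_of_neg_of_pos (mul_neg_of_neg_of_pos (mul_neg_of_pos_of_neg hF hv) hB) hP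
    constructor
    · apply mul_pos_of_neg_of_neg hC
      apply div_neg_of_pos_of_neg
      · apply mul_pos <;> linarith [hab.1, hab.2]
      · exact mul_neg_of_neg_of_pos (by linarith [hab.1]) (by linarith)
    · have hfrac : 0 < (α - v + β + 2) * (α + v + β + 2 * (n : ℝ) + 4) /
          ((α - v - β) * (α - v + β + 2 * (n : ℝ) + 2)) := by
        apply div_pos
        · apply mul_pos <;> linarith [hab.1, hab.2]
        · apply mul_pos <;> linarith [hab.1, hab.2]
      exact mul_pos_of_neg_of_neg hC (neg_neg_of_pos hfrac)
  · -- 0 < v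
    have habs : |v| = v := abs_of_pos hv
    rw [habs] at h2
    have hab' := abs_lt.mp (h1.trans_eq habs)
    have hab : α - β < v ∧ β - α < v := ⟨hab'.2, by linarith [hab'.1]⟩
    have hC : 0 < (n.factorial : ℝ) * v * betaFn (α + (n : ℝ) + 2) (β + (n : ℝ) + 2) /
        poch (α + β + (n : ℝ) + 3) n :=
      div_pos (mul_pos (mul_pos hF hv) hB) hP
    constructor
    · apply mul_pos hC
      apply div_pos
      · apply mul_pos <;> linarith [hab.1, hab.2]
      · apply mul_pos <;> linarith [hab.1, hab.2]
    · have hfrac : (α - v + β + 2) * (α + v + β + 2 * (n : ℝ) + 4) /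
          ((α - v - β) * (α - v + β + 2 * (n : ℝ) + 2)) < 0 := by
        apply div_neg_of_pos_of_neg
        · apply mul_pos <;> linarith [hab.1, hab.2]
        · exact mul_neg_of_neg_of_pos (by linarith [hab.1]) (by linarith)
      exact mul_pos hC (neg_pos.mpr hfrac)
end

section
/- Let P, Q : (0,1) → ℂ^{2×2} be differentiable matrix functions, W^{(k)}, W^{(k+1)} matrix functions satisfying W^{(k+1)} = W^{(k)}Φ^{(k)} and (W^{(k+1)})' = W^{(k)}Ψ^{(k)} on (0,1), and suppose the boundary terms P(t)W^{(k+1)}(t)Q(t)* vanish as t → 0⁺ and t → 1⁻. Then ∫₀¹ P'(t) W^{(k+1)}(t) Q(t)* dt = -∫₀¹ P(t) W^{(k)}(t) (Q'(t)Φ^{(k)}(t)* + Q(t)Ψ^{(k)}(t)*)* dt, assuming all integrals converge. -/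
open Matrix Set MeasureTheory

private lemma hasDerivAt_matMul_apply {A B : ℝ → Matrix (Fin 2) (Fin 2) ℂ}
    {A' B' : Matrix (Fin 2) (Fin 2) ℂ} {t : ℝ}
    (hA : ∀ i j, HasDerivAt (fun s => A s i j) (A' i j) t)
    (hB : ∀ i j, HasDerivAt (fun s => B s i j) (B' i j) t) (i j : Fin 2) :
    HasDerivAt (fun s => (A s * B s) i j) ((A' * B t + A t * B') i j) t := by
  have h : HasDerivAt (fun s => ∑ l : Fin 2, A s i l * B s l j)
      (∑ l : Fin 2, (A' i l * B t l j + A t i l * B' l j)) t :=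
    HasDerivAt.fun_sum fun l _ => (hA i l).mul (hB l j)
  simpa [Matrix.mul_apply, Matrix.add_apply, Finset.sum_add_distrib] using h

theorem stmt12
    (P Q Wk Wk1 Φ Ψ : ℝ → Matrix (Fin 2) (Fin 2) ℂ)
    -- P and Q are differentiable on (0,1)
    (hP : ∀ t ∈ Ioo (0 : ℝ) 1, ∀ i j : Fin 2, HasDerivAt (fun s => P s i j) (deriv (fun s => P s i j) t) t)
    (hQ : ∀ t ∈ Ioo (0 : ℝ) 1, ∀ i j : Fin 2, HasDerivAt (fun s => Q s i j) (deriv (fun s => Q s i j) t) t)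
    -- the first Pearson identity: W^{(k+1)} = W^{(k)} Φ^{(k)}
    (hPe1 : ∀ t ∈ Ioo (0 : ℝ) 1, Wk1 t = Wk t * Φ t)
    -- the second Pearson identity: (W^{(k+1)})' = W^{(k)} Ψ^{(k)}
    (hPe2 : ∀ t ∈ Ioo (0 : ℝ) 1, ∀ i j : Fin 2,
      HasDerivAt (fun s => Wk1 s i j) ((Wk t * Ψ t) i j) t)
    -- vanishing of boundary terms
    (hb0 : Filter.Tendsto (fun t => P t * Wk1 t * (Q t)ᴴ)
      (nhdsWithin 0 (Ioi (0 : ℝ))) (nhds 0))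
    (hb1 : Filter.Tendsto (fun t => P t * Wk1 t * (Q t)ᴴ)
      (nhdsWithin 1 (Iio (1 : ℝ))) (nhds 0))
    -- convergence of the integrals involved
    (hint1 : ∀ i j : Fin 2, IntervalIntegrable
      (fun t => ((fun s => Matrix.of fun i j => deriv (fun u => P u i j) s) t * Wk1 t * (Q t)ᴴ) i j)
      volume 0 1)
    (hint2 : ∀ i j : Fin 2, IntervalIntegrable
      (fun t => (P t * Wk t *
        (((fun s => Matrix.of fun i j => deriv (fun u => Q u i j) s) t * (Φ t)ᴴ + Q t * (Ψ t)ᴴ))ᴴ) i j)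
      volume 0 1) :
    ∀ i j : Fin 2,
      (∫ t in (0 : ℝ)..1,
          ((Matrix.of fun i j => deriv (fun u => P u i j) t) * Wk1 t * (Q t)ᴴ) i j) =
      -∫ t in (0 : ℝ)..1,
          (P t * Wk t *
            ((Matrix.of fun i j => deriv (fun u => Q u i j) t) * (Φ t)ᴴ + Q t * (Ψ t)ᴴ)ᴴ) i j := by
  intro i j
  set P' : ℝ → Matrix (Fin 2) (Fin 2) ℂ :=
    fun t => Matrix.of fun i j => deriv (fun u => P u i j) t with hP'
  set Q' : ℝ → Matrix (Fin 2) (Fin 2) ℂ :=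
    fun t => Matrix.of fun i j => deriv (fun u => Q u i j) t with hQ'
  set f : ℝ → ℂ := fun t => (P t * Wk1 t * (Q t)ᴴ) i j with hf
  set g1 : ℝ → ℂ := fun t => (P' t * Wk1 t * (Q t)ᴴ) i j with hg1
  set g2 : ℝ → ℂ := fun t =>
    (P t * Wk t * (Q' t * (Φ t)ᴴ + Q t * (Ψ t)ᴴ)ᴴ) i j with hg2
  set g : ℝ → ℂ := fun t => g1 t + g2 t with hg
  have hi1 : IntervalIntegrable g1 volume 0 1 := hint1 i j
  have hi2 : IntervalIntegrable g2 volume 0 1 := hint2 i j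
  have higi : IntervalIntegrable g volume 0 1 := hi1.add hi2
  -- derivative of f is g on (0,1)
  have hderiv : ∀ t ∈ Ioo (0 : ℝ) 1, HasDerivAt f (g t) t := by
    intro t ht
    have hQT : ∀ a b : Fin 2,
        HasDerivAt (fun s => (Q s)ᴴ a b) ((Q' t)ᴴ a b) t := by
      intro a b
      have := (hQ t ht b a).star
      simpa [Matrix.conjTranspose_apply, hQ'] using this
    have hPW : ∀ a b : Fin 2,
        HasDerivAt (fun s => (P s * Wk1 s) a b)
          ((P' t * Wk1 t + P t * (Wk t * Ψ t)) a b) t :=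
      hasDerivAt_matMul_apply (fun a b => hP t ht a b) (hPe2 t ht)
    have hmain := hasDerivAt_matMul_apply hPW hQT i j
    have heq : ((P' t * Wk1 t + P t * (Wk t * Ψ t)) * (Q t)ᴴ
        + (P t * Wk1 t) * (Q' t)ᴴ) i j = g t := by
      have h1 := hPe1 t ht
      have : (Q' t * (Φ t)ᴴ + Q t * (Ψ t)ᴴ)ᴴ
          = Φ t * (Q' t)ᴴ + Ψ t * (Q t)ᴴ := by
        simp [Matrix.conjTranspose_add, Matrix.conjTranspose_mul]
      simp only [hg, hg1, hg2]
      rw [this, h1]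
      simp only [Matrix.mul_add, Matrix.add_mul, Matrix.mul_assoc, Matrix.add_apply]
      ring
    rw [heq] at hmain
    exact hmain
  -- sequences approaching the endpoints
  set a : ℕ → ℝ := fun n => ((n : ℝ) + 2)⁻¹ with ha
  set b : ℕ → ℝ := fun n => 1 - ((n : ℝ) + 2)⁻¹ with hbdef
  have htop : Filter.Tendsto (fun n : ℕ => (n : ℝ) + 2) Filter.atTop Filter.atTop :=
    Filter.tendsto_atTop_add_const_right _ 2 tendsto_natCast_atTop_atTop
  have hinv : Filter.Tendsto (fun n : ℕ => ((n : ℝ) + 2)⁻¹) Filter.atTop (nhds 0) :=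
    htop.inv_tendsto_atTop
  have ha0 : Filter.Tendsto a Filter.atTop (nhds 0) := hinv
  have hb1' : Filter.Tendsto b Filter.atTop (nhds 1) := by
    have := hinv.const_sub 1
    simpa [hbdef] using this
  have hapos : ∀ n : ℕ, 0 < a n := by
    intro n; positivity
  have hahalf : ∀ n : ℕ, a n ≤ 1 / 2 := by
    intro n
    rw [ha]
    rw [inv_le_comm₀ (by positivity) (by norm_num)]
    linarith [Nat.cast_nonneg (α := ℝ) n]
  have hblt : ∀ n : ℕ, b n < 1 := by
    intro n; simp [hbdef]; positivity
  have hab : ∀ n : ℕ, a n ≤ b n := by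
    intro n
    have := hahalf n
    simp only [hbdef]
    linarith
  have hIccsub : ∀ n : ℕ, Icc (a n) (b n) ⊆ Ioo (0 : ℝ) 1 := by
    intro n x hx
    exact ⟨lt_of_lt_of_le (hapos n) hx.1, lt_of_le_of_lt hx.2 (hblt n)⟩
  -- FTC on each [a n, b n]
  have hFTC : ∀ n : ℕ, (∫ x in a n..b n, g x) = f (b n) - f (a n) := by
    intro n
    apply intervalIntegral.integral_eq_sub_of_hasDerivAt
    · intro x hx
      rw [uIcc_of_le (hab n)] at hx
      exact hderiv x (hIccsub n hx)
    · apply higi.mono_set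
      rw [uIcc_of_le (hab n), uIcc_of_le (by norm_num : (0:ℝ) ≤ 1)]
      exact Icc_subset_Icc (hapos n).le (hblt n).le
  -- limit of the LHS: tendsto to ∫ over Ioc 0 1
  have hgIoc : IntegrableOn g (Ioc (0:ℝ) 1) volume :=
    (intervalIntegrable_iff_integrableOn_Ioc_of_le (by norm_num : (0:ℝ) ≤ 1)).mp higi
  have hcover : AECover ((volume : Measure ℝ).restrict (Ioc (0:ℝ) 1)) Filter.atTop
      (fun n => Ioc (a n) (b n)) := aecover_Ioc_of_Ioc ha0 hb1'
  have hlim1 : Filter.Tendsto (fun n => ∫ x in a n..b n, g x) Filter.atTop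
      (nhds (∫ x in Ioc (0:ℝ) 1, g x)) := by
    have h := hcover.integral_tendsto_of_countably_generated hgIoc
    have hrw : ∀ n : ℕ, (∫ x in Ioc (a n) (b n), g x
        ∂((volume : Measure ℝ).restrict (Ioc (0:ℝ) 1))) = ∫ x in a n..b n, g x := by
      intro n
      rw [Measure.restrict_restrict measurableSet_Ioc]
      rw [inter_eq_left.mpr (Ioc_subset_Ioc (hapos n).le (hblt n).le)]
      rw [intervalIntegral.integral_of_le (hab n)]
    simpa only [hrw] using h
  -- limit of the RHS: tendsto to 0
  have hfb0 : Filter.Tendsto f (nhdsWithin 0 (Ioi (0:ℝ))) (nhds 0) := by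
    have h1 := tendsto_pi_nhds.mp hb0 i
    have h2 := tendsto_pi_nhds.mp h1 j
    simpa using h2
  have hfb1 : Filter.Tendsto f (nhdsWithin 1 (Iio (1:ℝ))) (nhds 0) := by
    have h1 := tendsto_pi_nhds.mp hb1 i
    have h2 := tendsto_pi_nhds.mp h1 j
    simpa using h2
  have haW : Filter.Tendsto a Filter.atTop (nhdsWithin 0 (Ioi (0:ℝ))) :=
    tendsto_nhdsWithin_of_tendsto_nhds_of_eventually_within _ ha0
      (Filter.Eventually.of_forall fun n => hapos n)
  have hbW : Filter.Tendsto b Filter.atTop (nhdsWithin 1 (Iio (1:ℝ))) :=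
    tendsto_nhdsWithin_of_tendsto_nhds_of_eventually_within _ hb1'
      (Filter.Eventually.of_forall fun n => hblt n)
  have hlim2 : Filter.Tendsto (fun n => f (b n) - f (a n)) Filter.atTop (nhds 0) := by
    have := (hfb1.comp hbW).sub (hfb0.comp haW)
    simpa using this
  have hzero : (∫ x in Ioc (0:ℝ) 1, g x) = 0 := by
    have : Filter.Tendsto (fun n => ∫ x in a n..b n, g x) Filter.atTop (nhds 0) := by
      simpa only [hFTC] using hlim2
    exact tendsto_nhds_unique hlim1 this
  have hg01 : (∫ t in (0:ℝ)..1, g t) = 0 := by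
    rw [intervalIntegral.integral_of_le (by norm_num : (0:ℝ) ≤ 1)]
    exact hzero
  have hsplit : (∫ t in (0:ℝ)..1, g t) = (∫ t in (0:ℝ)..1, g1 t) + ∫ t in (0:ℝ)..1, g2 t :=
    intervalIntegral.integral_add hi1 hi2
  have : (∫ t in (0:ℝ)..1, g1 t) + (∫ t in (0:ℝ)..1, g2 t) = 0 := by
    rw [← hsplit]; exact hg01
  exact eq_neg_of_add_eq_zero_left this
end

section
/- For n ≥ 1 and k ≥ 0, the product ∏_{i=1}^{n} ((i-1)A₂^{k+n-i} + B₁^{k+n-i}) equals (-1)^n (α+β+3+2k+n)ₙ · diag( (α+v+β+2(k+1+n))/(α+v+β+2(k+1)), (α-v+β+2(k+1+n))/(α-v+β+2(k+1)) ), where A₂ʲ = diag(-(α+v+β+2(j+2))/(α+v+β+2(j+1)), -(α-v+β+2(j+2))/(α-v+β+2(j+1))) and B₁ʲ = (α+β+4+2j)A₂ʲ. -/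
open Matrix

noncomputable section

/-- Leading coefficient `A₂ʲ` of `Φ^{(j)}`. -/
def A2 (α β v : ℝ) (j : ℕ) : Matrix (Fin 2) (Fin 2) ℝ :=
  !![-((α + v + β + 2 * ((j : ℝ) + 2)) / (α + v + β + 2 * ((j : ℝ) + 1))), 0;
     0, -((α - v + β + 2 * ((j : ℝ) + 2)) / (α - v + β + 2 * ((j : ℝ) + 1)))]

/-- Leading coefficient `B₁ʲ` of `Ψ^{(j)}`. -/
def B1 (α β v : ℝ) (j : ℕ) : Matrix (Fin 2) (Fin 2) ℝ :=
  (α + β + 4 + 2 * (j : ℝ)) • A2 α β v j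

end

private lemma diag_mul (a b c d : ℝ) :
    (!![a, 0; 0, b] : Matrix (Fin 2) (Fin 2) ℝ) * !![c, 0; 0, d] = !![a * c, 0; 0, b * d] := by
  ext i j
  fin_cases i <;> fin_cases j <;> simp [Matrix.mul_apply, Fin.sum_univ_two]

private lemma smul_diag_eq (r s a b c d : ℝ) (h1 : r * a = s * c) (h2 : r * b = s * d) :
    r • (!![a, 0; 0, b] : Matrix (Fin 2) (Fin 2) ℝ) = s • !![c, 0; 0, d] := by
  ext i j
  fin_cases i <;> fin_cases j <;> simp [h1, h2]

private lemma sum_add_diag (r : ℝ) (a b c d : ℝ) :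
    r • (!![a, 0; 0, b] : Matrix (Fin 2) (Fin 2) ℝ) + !![c, 0; 0, d] =
      !![r * a + c, 0; 0, r * b + d] := by
  ext i j
  fin_cases i <;> fin_cases j <;> simp

set_option maxHeartbeats 1600000 in
theorem stmt13 (α β v : ℝ)
    (hden : ∀ j : ℕ, α + v + β + 2 * ((j : ℝ) + 1) ≠ 0 ∧ α - v + β + 2 * ((j : ℝ) + 1) ≠ 0)
    (n k : ℕ) (hn : 1 ≤ n) :
    -- the product ∏_{i=1}^n ((i-1) A₂^{k+n-i} + B₁^{k+n-i}), taken left to right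
    (((List.range n).map fun (i : ℕ) =>
        (i : ℝ) • A2 α β v ((k + n - 1 - i : ℕ)) + B1 α β v ((k + n - 1 - i : ℕ))).prod :
        Matrix (Fin 2) (Fin 2) ℝ) =
      ((-1 : ℝ) ^ n * ∏ i ∈ Finset.range n, (α + β + 3 + 2 * (k : ℝ) + (n : ℝ) + (i : ℝ))) •
        !![(α + v + β + 2 * ((k : ℝ) + 1 + (n : ℝ))) / (α + v + β + 2 * ((k : ℝ) + 1)), 0;
           0, (α - v + β + 2 * ((k : ℝ) + 1 + (n : ℝ))) / (α - v + β + 2 * ((k : ℝ) + 1))] := by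
  -- a factor as a single diagonal matrix
  have hfac : ∀ (m j : ℕ), (m : ℝ) • A2 α β v j + B1 α β v j =
      ((m : ℝ) + (α + β + 4 + 2 * (j : ℝ))) •
        !![-((α + v + β + 2 * ((j : ℝ) + 2)) / (α + v + β + 2 * ((j : ℝ) + 1))), 0;
           0, -((α - v + β + 2 * ((j : ℝ) + 2)) / (α - v + β + 2 * ((j : ℝ) + 1)))] := by
    intro m j
    simp only [B1, A2, ← add_smul]
  induction n, hn using Nat.le_induction generalizing k with
  | base =>
    simp only [List.range_succ, List.range_zero, List.nil_append, List.map_cons, List.map_nil,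
      List.prod_cons, List.prod_nil, mul_one, Nat.add_sub_cancel, Nat.sub_zero]
    rw [hfac]
    apply smul_diag_eq <;> · push_cast [Finset.prod_range_one]; ring
  | succ n hn ih =>
    have hlist : (List.range (n + 1)).map (fun (i : ℕ) =>
        (i : ℝ) • A2 α β v ((k + (n + 1) - 1 - i : ℕ)) + B1 α β v ((k + (n + 1) - 1 - i : ℕ))) =
        ((List.range n).map (fun (i : ℕ) =>
          (i : ℝ) • A2 α β v (((k + 1) + n - 1 - i : ℕ)) + B1 α β v (((k + 1) + n - 1 - i : ℕ))))
          ++ [(n : ℝ) • A2 α β v k + B1 α β v k] := by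
      rw [List.range_succ, List.map_append]
      congr 1
      · apply List.map_congr_left
        intro i hi
        have h : k + (n + 1) - 1 - i = (k + 1) + n - 1 - i := by omega
        rw [h]
      · simp only [List.map_cons, List.map_nil]
        have h : k + (n + 1) - 1 - n = k := by omega
        rw [h]
    rw [hlist, List.prod_append, List.prod_singleton, ih (k + 1), hfac,
      Matrix.smul_mul, Matrix.mul_smul, diag_mul, smul_smul]
    have h0' := (hden k).1
    have h0'' := (hden k).2
    have h1' : α + v + β + 2 * ((k : ℝ) + 2) ≠ 0 := by
      have h := (hden (k + 1)).1; push_cast at h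
      intro hc; exact h (by linarith)
    have h1'' : α - v + β + 2 * ((k : ℝ) + 2) ≠ 0 := by
      have h := (hden (k + 1)).2; push_cast at h
      intro hc; exact h (by linarith)
    have hprod : (∏ i ∈ Finset.range (n + 1),
        (α + β + 3 + 2 * (k : ℝ) + ((n + 1 : ℕ) : ℝ) + (i : ℝ))) =
        (α + β + 3 + 2 * (k : ℝ) + (n : ℝ) + 1) *
          ∏ i ∈ Finset.range n, (α + β + 3 + 2 * (((k + 1 : ℕ)) : ℝ) + (n : ℝ) + (i : ℝ)) := by
      rw [Finset.prod_range_succ', mul_comm]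
      congr 1
      · push_cast; ring
      · apply Finset.prod_congr rfl
        intro i _
        push_cast; ring
    have hdiv : ∀ x y z : ℝ, y ≠ 0 → x / y * -(y / z) = -(x / z) := by
      intro x y z hy
      rw [mul_neg, div_mul_div_comm, mul_comm x y, mul_div_mul_left _ _ hy]
    apply smul_diag_eq
    · rw [hprod]
      push_cast
      rw [show α + v + β + 2 * ((k : ℝ) + 1 + 1) = α + v + β + 2 * ((k : ℝ) + 2) from by ring,
        hdiv _ _ _ h1']
      ring
    · rw [hprod]
      push_cast
      rw [show α - v + β + 2 * ((k : ℝ) + 1 + 1) = α - v + β + 2 * ((k : ℝ) + 2) from by ring,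
        hdiv _ _ _ h1'']
      ring
end

section
/- Let D = (d²/dt²)F₂ + (d/dt)F₁ + F₀ be symmetric with respect to the weight W on (a,b) (i.e. ⟨PD,Q⟩_W = ⟨P,QD⟩_W for all matrix polynomials P, Q), where F₂, F₁, F₀ have polynomial entries. Then F₂(t)W(t) = W(t)F₂(t)* for almost every t ∈ (a,b). -/
open Matrix MeasureTheory ComplexOrder

/-- Evaluation of a matrix with polynomial entries at a real point. -/
noncomputable def evalMat {N : ℕ} (p : Matrix (Fin N) (Fin N) (Polynomial ℂ)) (t : ℝ) :
    Matrix (Fin N) (Fin N) ℂ :=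
  Matrix.of fun i j => (p i j).eval (t : ℂ)

/-- Entrywise derivative of a matrix of polynomials. -/
noncomputable def dMat {N : ℕ} (p : Matrix (Fin N) (Fin N) (Polynomial ℂ)) :
    Matrix (Fin N) (Fin N) (Polynomial ℂ) :=
  Matrix.of fun i j => Polynomial.derivative (p i j)

/-- Action of the right-hand differential operator `D = ∂²F₂ + ∂F₁ + F₀`
on a matrix polynomial `p`, evaluated at `t`. -/
noncomputable def applyD {N : ℕ} (F₂ F₁ F₀ p : Matrix (Fin N) (Fin N) (Polynomial ℂ)) (t : ℝ) :
    Matrix (Fin N) (Fin N) ℂ :=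
  evalMat (dMat (dMat p)) t * evalMat F₂ t + evalMat (dMat p) t * evalMat F₁ t +
    evalMat p t * evalMat F₀ t

open Polynomial

/-- scalar entry of `evalMat M t * W t` -/
noncomputable def MWe {N : ℕ} (W : ℝ → Matrix (Fin N) (Fin N) ℂ)
    (M : Matrix (Fin N) (Fin N) (Polynomial ℂ)) (i j : Fin N) (t : ℝ) : ℂ :=
  (evalMat M t * W t) i j

/-- scalar entry of `W t * (evalMat M t)ᴴ` -/
noncomputable def WMe {N : ℕ} (W : ℝ → Matrix (Fin N) (Fin N) ℂ)
    (M : Matrix (Fin N) (Fin N) (Polynomial ℂ)) (i j : Fin N) (t : ℝ) : ℂ :=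
  (W t * (evalMat M t)ᴴ) i j

lemma evalMat_smul_one {N : ℕ} (f : Polynomial ℂ) (t : ℝ) :
    evalMat (N := N) (f • 1) t = f.eval (t : ℂ) • 1 := by
  ext i j
  by_cases h : i = j <;>
    simp [evalMat, Matrix.smul_apply, Matrix.one_apply, h, smul_eq_mul]

lemma dMat_smul_one {N : ℕ} (f : Polynomial ℂ) :
    dMat (N := N) (f • 1) = (Polynomial.derivative f) • 1 := by
  ext i j
  by_cases h : i = j <;>
    simp [dMat, Matrix.smul_apply, Matrix.one_apply, h, smul_eq_mul]

lemma applyD_smul_one {N : ℕ} (F₂ F₁ F₀ : Matrix (Fin N) (Fin N) (Polynomial ℂ))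
    (f : Polynomial ℂ) (t : ℝ) :
    applyD F₂ F₁ F₀ (f • 1) t =
      ((Polynomial.derivative (Polynomial.derivative f)).eval (t:ℂ)) • evalMat F₂ t +
      ((Polynomial.derivative f).eval (t:ℂ)) • evalMat F₁ t +
      (f.eval (t:ℂ)) • evalMat F₀ t := by
  simp [applyD, dMat_smul_one, evalMat_smul_one, Matrix.smul_mul]

lemma lhs_entry {N : ℕ} (W : ℝ → Matrix (Fin N) (Fin N) ℂ)
    (F₂ F₁ F₀ : Matrix (Fin N) (Fin N) (Polynomial ℂ)) (f g : Polynomial ℂ) (t : ℝ)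
    (i j : Fin N) :
    ((applyD F₂ F₁ F₀ (f • 1) t * W t * (evalMat (g • 1) t)ᴴ : Matrix (Fin N) (Fin N) ℂ)) i j
      = (starRingEnd ℂ) (g.eval (t:ℂ)) *
        ((Polynomial.derivative (Polynomial.derivative f)).eval (t:ℂ) * MWe W F₂ i j t +
         (Polynomial.derivative f).eval (t:ℂ) * MWe W F₁ i j t +
         f.eval (t:ℂ) * MWe W F₀ i j t) := by
  simp [MWe, applyD_smul_one, evalMat_smul_one, Matrix.add_mul, Matrix.smul_mul,
    Matrix.conjTranspose_smul, Matrix.mul_smul, Matrix.add_apply, Matrix.smul_apply,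
    smul_eq_mul]
  

lemma rhs_entry {N : ℕ} (W : ℝ → Matrix (Fin N) (Fin N) ℂ)
    (F₂ F₁ F₀ : Matrix (Fin N) (Fin N) (Polynomial ℂ)) (f g : Polynomial ℂ) (t : ℝ)
    (i j : Fin N) :
    ((evalMat (f • 1) t * W t * (applyD F₂ F₁ F₀ (g • 1) t)ᴴ : Matrix (Fin N) (Fin N) ℂ)) i j
      = f.eval (t:ℂ) *
        ((starRingEnd ℂ) ((Polynomial.derivative (Polynomial.derivative g)).eval (t:ℂ)) *
            WMe W F₂ i j t +
         (starRingEnd ℂ) ((Polynomial.derivative g).eval (t:ℂ)) * WMe W F₁ i j t +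
         (starRingEnd ℂ) (g.eval (t:ℂ)) * WMe W F₀ i j t) := by
  simp [WMe, applyD_smul_one, evalMat_smul_one, Matrix.conjTranspose_add,
    Matrix.conjTranspose_smul, Matrix.mul_add, Matrix.mul_smul, Matrix.smul_mul,
    Matrix.add_apply, Matrix.smul_apply, smul_eq_mul]
  

section Int
variable {N : ℕ} {a b : ℝ} {W : ℝ → Matrix (Fin N) (Fin N) ℂ}

lemma intPW (hmom : ∀ n : ℕ, ∀ i j, IntervalIntegrable (fun t => (t : ℂ) ^ n * W t i j) volume a b)
    (p : Polynomial ℂ) (i j : Fin N) :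
    IntervalIntegrable (fun t => p.eval (t:ℂ) * W t i j) volume a b := by
  induction p using Polynomial.induction_on' with
  | monomial n c =>
      have := (hmom n i j).const_mul c
      simpa [Polynomial.eval_monomial, mul_assoc] using this
  | add p q hp hq =>
      simpa [add_mul] using hp.add hq

lemma conj_eval (p : Polynomial ℂ) (t : ℝ) :
    (starRingEnd ℂ) (p.eval (t:ℂ)) = (p.map (starRingEnd ℂ)).eval (t:ℂ) := by
  conv_rhs => rw [show ((t:ℂ)) = (starRingEnd ℂ) (t:ℂ) by simp]
  rw [Polynomial.eval_map, Polynomial.eval₂_at_apply]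

lemma intMW (hmom : ∀ n : ℕ, ∀ i j, IntervalIntegrable (fun t => (t : ℂ) ^ n * W t i j) volume a b)
    (q : Polynomial ℂ) (M : Matrix (Fin N) (Fin N) (Polynomial ℂ)) (i j : Fin N) :
    IntervalIntegrable (fun t => q.eval (t:ℂ) * MWe W M i j t) volume a b := by
  have : (fun t : ℝ => q.eval (t:ℂ) * MWe W M i j t)
      = fun t : ℝ => ∑ l, (q * M i l).eval (t:ℂ) * W t l j := by
    funext t
    simp [MWe, evalMat, Matrix.mul_apply, Finset.mul_sum, mul_assoc]
  rw [this]
  have h2 := IntervalIntegrable.sum (μ := volume) (a := a) (b := b) Finset.univ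
    (f := fun l (t : ℝ) => (q * M i l).eval (t:ℂ) * W t l j) (fun l _ => intPW hmom _ _ _)
  rw [Finset.sum_fn] at h2
  exact h2

lemma intWM (hmom : ∀ n : ℕ, ∀ i j, IntervalIntegrable (fun t => (t : ℂ) ^ n * W t i j) volume a b)
    (q : Polynomial ℂ) (M : Matrix (Fin N) (Fin N) (Polynomial ℂ)) (i j : Fin N) :
    IntervalIntegrable (fun t => q.eval (t:ℂ) * WMe W M i j t) volume a b := by
  have : (fun t : ℝ => q.eval (t:ℂ) * WMe W M i j t)
      = fun t : ℝ => ∑ l, (q * (M j l).map (starRingEnd ℂ)).eval (t:ℂ) * W t i l := by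
    funext t
    simp [WMe, evalMat, Matrix.mul_apply, Matrix.conjTranspose_apply, Finset.mul_sum, ← conj_eval]
    ring_nf
    congr 1
    funext l
    ring
  rw [this]
  have h2 := IntervalIntegrable.sum (μ := volume) (a := a) (b := b) Finset.univ
    (f := fun l (t : ℝ) => (q * (M j l).map (starRingEnd ℂ)).eval (t:ℂ) * W t i l)
    (fun l _ => intPW hmom _ _ _)
  rw [Finset.sum_fn] at h2
  exact h2

end Int

lemma conj_eval' (p : Polynomial ℂ) (t : ℝ) :
    (starRingEnd ℂ) (p.eval (t:ℂ)) = (p.map (starRingEnd ℂ)).eval (t:ℂ) := by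
  conv_rhs => rw [show ((t:ℂ)) = (starRingEnd ℂ) (t:ℂ) by simp]
  rw [Polynomial.eval_map, Polynomial.eval₂_at_apply]

lemma norm_eq_zero_of_forall_le {I : ℂ} {C : ℝ} (hC : 0 ≤ C)
    (h : ∀ ε > (0:ℝ), ‖I‖ ≤ ε * C) : I = 0 := by
  by_contra hne
  have hpos : 0 < ‖I‖ := norm_pos_iff.mpr hne
  have hk := h (‖I‖ / (2 * (C + 1))) (by positivity)
  have hlt : ‖I‖ / (2 * (C + 1)) * C < ‖I‖ := by
    rw [div_mul_eq_mul_div, div_lt_iff₀ (by positivity)]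
    nlinarith
  linarith

lemma moments_zero {a b : ℝ} (hab : a < b) {f : ℝ → ℂ}
    (hf : MeasureTheory.IntegrableOn f (Set.Ioo a b))
    (h : ∀ n : ℕ, ∫ t in Set.Ioo a b, (t:ℂ)^n * f t = 0) :
    ∀ᵐ t ∂(volume.restrict (Set.Ioo a b)), f t = 0 := by
  set μ := volume.restrict (Set.Ioo a b) with hμ
  have hfi : Integrable f μ := hf
  -- any continuous function is bounded on Ioo a.e. wrt μ, so products are integrable
  have hbdd : ∀ (g : ℝ → ℂ), Continuous g → Integrable (fun t => g t * f t) μ := by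
    intro g hg
    obtain ⟨C, hC⟩ := (isCompact_Icc (a := a) (b := b)).exists_bound_of_continuousOn
      hg.continuousOn
    refine hfi.bdd_mul (c := C) (hg.aestronglyMeasurable) ?_
    refine Filter.eventually_of_mem (self_mem_ae_restrict measurableSet_Ioo) fun x hx => ?_
    exact hC x (Set.mem_Icc_of_Ioo hx)
  have hpoly : ∀ p : Polynomial ℂ, ∫ t, p.eval (t:ℂ) * f t ∂μ = 0 := by
    intro p
    induction p using Polynomial.induction_on' with
    | monomial n c =>
        have : (fun t : ℝ => (Polynomial.monomial n c).eval (t:ℂ) * f t)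
            = fun t : ℝ => c * ((t:ℂ)^n * f t) := by
          funext t; simp [Polynomial.eval_monomial, mul_assoc]
        rw [this, MeasureTheory.integral_const_mul, h n, mul_zero]
    | add p q hp hq =>
        have hip : Integrable (fun t : ℝ => p.eval (t:ℂ) * f t) μ :=
          hbdd _ (Polynomial.continuous_aeval (R := ℂ) p |>.comp Complex.continuous_ofReal)
        have hiq : Integrable (fun t : ℝ => q.eval (t:ℂ) * f t) μ :=
          hbdd _ (Polynomial.continuous_aeval (R := ℂ) q |>.comp Complex.continuous_ofReal)
        have : (fun t : ℝ => (p + q).eval (t:ℂ) * f t)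
            = fun t : ℝ => p.eval (t:ℂ) * f t + q.eval (t:ℂ) * f t := by
          funext t; simp [add_mul]
        rw [this, MeasureTheory.integral_add hip hiq, hp, hq, add_zero]
  apply ae_eq_zero_of_integral_contDiff_smul_eq_zero (hfi.locallyIntegrable)
  intro g hg hgsupp
  -- rewrite smul as complex multiplication
  have hrw : ∀ x : ℝ, g x • f x = ((g x : ℝ) : ℂ) * f x := fun x => by
    rw [Complex.real_smul]
  have hgc : Continuous fun x : ℝ => ((g x : ℝ) : ℂ) :=
    Complex.continuous_ofReal.comp hg.continuous
  have key : ∀ ε > (0:ℝ), ‖∫ x, g x • f x ∂μ‖ ≤ ε * ∫ x, ‖f x‖ ∂μ := by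
    intro ε hε
    obtain ⟨p, hp⟩ := exists_polynomial_near_of_continuousOn a b g
      hg.continuous.continuousOn ε hε
    -- the complex polynomial corresponding to p
    set q : Polynomial ℂ := p.map (algebraMap ℝ ℂ) with hq
    have hqe : ∀ t : ℝ, q.eval (t:ℂ) = ((p.eval t : ℝ) : ℂ) := by
      intro t
      rw [hq, Polynomial.eval_map, ← Complex.coe_algebraMap, Polynomial.eval₂_at_apply]
    have hiq : Integrable (fun t : ℝ => q.eval (t:ℂ) * f t) μ :=
      hbdd _ (Polynomial.continuous_aeval (R := ℂ) q |>.comp Complex.continuous_ofReal)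
    have hig : Integrable (fun x : ℝ => g x • f x) μ := by
      have := hbdd _ hgc
      simpa [hrw] using this
    have split : (∫ x, g x • f x ∂μ)
        = (∫ x, (((g x : ℝ) : ℂ) - q.eval (x:ℂ)) * f x ∂μ) + ∫ x, q.eval (x:ℂ) * f x ∂μ := by
      rw [← MeasureTheory.integral_add (by
          have := (hbdd _ (hgc.sub (Polynomial.continuous_aeval (R := ℂ) q |>.comp
            Complex.continuous_ofReal)))
          simpa [sub_mul] using this) hiq]
      congr 1
      funext x
      rw [hrw]
      ring
    rw [split, hpoly q, add_zero]
    calc ‖∫ x, (((g x : ℝ) : ℂ) - q.eval (x:ℂ)) * f x ∂μ‖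
        ≤ ∫ x, ‖(((g x : ℝ) : ℂ) - q.eval (x:ℂ)) * f x‖ ∂μ :=
          MeasureTheory.norm_integral_le_integral_norm _
      _ ≤ ∫ x, ε * ‖f x‖ ∂μ := by
          apply MeasureTheory.integral_mono_ae
          · have := (hbdd _ (hgc.sub (Polynomial.continuous_aeval (R := ℂ) q |>.comp
              Complex.continuous_ofReal)))
            exact (by simpa [sub_mul] using this : Integrable _ μ).norm
          · exact hfi.norm.const_mul ε
          · refine Filter.eventually_of_mem (self_mem_ae_restrict measurableSet_Ioo)
              fun x hx => ?_
            dsimp only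
            rw [norm_mul]
            apply mul_le_mul_of_nonneg_right _ (norm_nonneg _)
            have := hp x (Set.mem_Icc_of_Ioo hx)
            rw [hqe]
            have : ‖((g x - p.eval x : ℝ) : ℂ)‖ ≤ ε := by
              rw [Complex.norm_real]
              rw [Real.norm_eq_abs]
              have h2 := hp x (Set.mem_Icc_of_Ioo hx)
              rw [abs_sub_comm] at h2
              exact le_of_lt h2
            simpa [Complex.ofReal_sub] using this
      _ = ε * ∫ x, ‖f x‖ ∂μ := by rw [MeasureTheory.integral_const_mul]
  exact norm_eq_zero_of_forall_le
    (MeasureTheory.integral_nonneg fun x => norm_nonneg _) key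

section Canon
variable {N : ℕ} {a b : ℝ} {W : ℝ → Matrix (Fin N) (Fin N) ℂ}

lemma intXMW (hmom : ∀ n : ℕ, ∀ i j, IntervalIntegrable (fun t => (t : ℂ) ^ n * W t i j) volume a b)
    (r : ℕ) (M : Matrix (Fin N) (Fin N) (Polynomial ℂ)) (i j : Fin N) :
    IntervalIntegrable (fun t : ℝ => (t:ℂ)^r * MWe W M i j t) volume a b := by
  have h := intMW hmom (Polynomial.X ^ r) M i j
  have e : (fun t : ℝ => Polynomial.eval (t:ℂ) (Polynomial.X ^ r) * MWe W M i j t)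
      = fun t : ℝ => (t:ℂ)^r * MWe W M i j t := by
    funext t; rw [Polynomial.eval_pow, Polynomial.eval_X]
  rwa [e] at h

lemma intXWM (hmom : ∀ n : ℕ, ∀ i j, IntervalIntegrable (fun t => (t : ℂ) ^ n * W t i j) volume a b)
    (r : ℕ) (M : Matrix (Fin N) (Fin N) (Polynomial ℂ)) (i j : Fin N) :
    IntervalIntegrable (fun t : ℝ => (t:ℂ)^r * WMe W M i j t) volume a b := by
  have h := intWM hmom (Polynomial.X ^ r) M i j
  have e : (fun t : ℝ => Polynomial.eval (t:ℂ) (Polynomial.X ^ r) * WMe W M i j t)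
      = fun t : ℝ => (t:ℂ)^r * WMe W M i j t := by
    funext t; rw [Polynomial.eval_pow, Polynomial.eval_X]
  rwa [e] at h

lemma isplit3 {c1 c2 c3 : ℂ} {u v w : ℝ → ℂ}
    (hu : IntervalIntegrable u volume a b) (hv : IntervalIntegrable v volume a b)
    (hw : IntervalIntegrable w volume a b) :
    (∫ t in a..b, (c1 * u t + c2 * v t + c3 * w t)) =
      c1 * (∫ t in a..b, u t) + c2 * (∫ t in a..b, v t) + c3 * ∫ t in a..b, w t := by
  rw [intervalIntegral.integral_add ((hu.const_mul c1).add (hv.const_mul c2)) (hw.const_mul c3),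
    intervalIntegral.integral_add (hu.const_mul c1) (hv.const_mul c2),
    intervalIntegral.integral_const_mul, intervalIntegral.integral_const_mul,
    intervalIntegral.integral_const_mul]

/-- canonical-form integral for the `⟨PD,Q⟩` side -/
lemma canonL (hmom : ∀ n : ℕ, ∀ i j, IntervalIntegrable (fun t => (t : ℂ) ^ n * W t i j) volume a b)
    (F₂ F₁ F₀ : Matrix (Fin N) (Fin N) (Polynomial ℂ)) (i j : Fin N) (c2 c1 c0 : ℂ) (k : ℕ) :
    (∫ t in a..b, (c2 * ((t:ℂ)^k * MWe W F₂ i j t) +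
        c1 * ((t:ℂ)^(k+1) * MWe W F₁ i j t) +
        c0 * ((t:ℂ)^(k+2) * MWe W F₀ i j t))) =
      c2 * (∫ t in a..b, (t:ℂ)^k * MWe W F₂ i j t) +
      c1 * (∫ t in a..b, (t:ℂ)^(k+1) * MWe W F₁ i j t) +
      c0 * (∫ t in a..b, (t:ℂ)^(k+2) * MWe W F₀ i j t) := by
  exact isplit3 (intXMW hmom k F₂ i j) (intXMW hmom (k+1) F₁ i j) (intXMW hmom (k+2) F₀ i j)

lemma canonR (hmom : ∀ n : ℕ, ∀ i j, IntervalIntegrable (fun t => (t : ℂ) ^ n * W t i j) volume a b)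
    (F₂ F₁ F₀ : Matrix (Fin N) (Fin N) (Polynomial ℂ)) (i j : Fin N) (c2 c1 c0 : ℂ) (k : ℕ) :
    (∫ t in a..b, (c2 * ((t:ℂ)^k * WMe W F₂ i j t) +
        c1 * ((t:ℂ)^(k+1) * WMe W F₁ i j t) +
        c0 * ((t:ℂ)^(k+2) * WMe W F₀ i j t))) =
      c2 * (∫ t in a..b, (t:ℂ)^k * WMe W F₂ i j t) +
      c1 * (∫ t in a..b, (t:ℂ)^(k+1) * WMe W F₁ i j t) +
      c0 * (∫ t in a..b, (t:ℂ)^(k+2) * WMe W F₀ i j t) := by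
  exact isplit3 (intXWM hmom k F₂ i j) (intXWM hmom (k+1) F₁ i j) (intXWM hmom (k+2) F₀ i j)

end Canon

section Pt
variable {N : ℕ} (W : ℝ → Matrix (Fin N) (Fin N) ℂ)
  (F₂ F₁ F₀ : Matrix (Fin N) (Fin N) (Polynomial ℂ)) (i j : Fin N) (k : ℕ)

lemma ptL0 : (fun t : ℝ => ((applyD F₂ F₁ F₀ ((1:Polynomial ℂ) • 1) t * W t *
      (evalMat (((Polynomial.X)^(k+2) : Polynomial ℂ) • 1) t)ᴴ : Matrix (Fin N) (Fin N) ℂ)) i j)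
    = fun t : ℝ => (0:ℂ) * ((t:ℂ)^k * MWe W F₂ i j t) + (0:ℂ) * ((t:ℂ)^(k+1) * MWe W F₁ i j t) +
      (1:ℂ) * ((t:ℂ)^(k+2) * MWe W F₀ i j t) := by
  funext t
  rw [lhs_entry]
  simp [map_pow, map_ofNat, Complex.conj_ofReal]
  try ring

lemma ptL1 : (fun t : ℝ => ((applyD F₂ F₁ F₀ ((Polynomial.X : Polynomial ℂ) • 1) t * W t *
      (evalMat (((Polynomial.X)^(k+1) : Polynomial ℂ) • 1) t)ᴴ : Matrix (Fin N) (Fin N) ℂ)) i j)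
    = fun t : ℝ => (0:ℂ) * ((t:ℂ)^k * MWe W F₂ i j t) + (1:ℂ) * ((t:ℂ)^(k+1) * MWe W F₁ i j t) +
      (1:ℂ) * ((t:ℂ)^(k+2) * MWe W F₀ i j t) := by
  funext t
  rw [lhs_entry]
  simp [map_pow, map_ofNat, Complex.conj_ofReal]
  try ring

lemma ptL2 : (fun t : ℝ => ((applyD F₂ F₁ F₀ (((Polynomial.X)^2 : Polynomial ℂ) • 1) t * W t *
      (evalMat (((Polynomial.X)^k : Polynomial ℂ) • 1) t)ᴴ : Matrix (Fin N) (Fin N) ℂ)) i j)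
    = fun t : ℝ => (2:ℂ) * ((t:ℂ)^k * MWe W F₂ i j t) + (2:ℂ) * ((t:ℂ)^(k+1) * MWe W F₁ i j t) +
      (1:ℂ) * ((t:ℂ)^(k+2) * MWe W F₀ i j t) := by
  funext t
  rw [lhs_entry]
  simp [map_pow, map_ofNat, Complex.conj_ofReal, Polynomial.derivative_X_pow]
  try ring

lemma ptR0 : (fun t : ℝ => ((evalMat ((1:Polynomial ℂ) • 1) t * W t *
      (applyD F₂ F₁ F₀ (((Polynomial.X)^(k+2) : Polynomial ℂ) • 1) t)ᴴ : Matrix (Fin N) (Fin N) ℂ)) i j)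
    = fun t : ℝ => (((k:ℂ)+2)*((k:ℂ)+1)) * ((t:ℂ)^k * WMe W F₂ i j t) +
      ((k:ℂ)+2) * ((t:ℂ)^(k+1) * WMe W F₁ i j t) +
      (1:ℂ) * ((t:ℂ)^(k+2) * WMe W F₀ i j t) := by
  funext t
  rw [rhs_entry]
  simp [map_pow, map_ofNat, Complex.conj_ofReal, Polynomial.derivative_X_pow]
  try push_cast
  try ring

lemma ptR1 : (fun t : ℝ => ((evalMat ((Polynomial.X : Polynomial ℂ) • 1) t * W t *
      (applyD F₂ F₁ F₀ (((Polynomial.X)^(k+1) : Polynomial ℂ) • 1) t)ᴴ : Matrix (Fin N) (Fin N) ℂ)) i j)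
    = fun t : ℝ => (((k:ℂ)+1)*(k:ℂ)) * ((t:ℂ)^k * WMe W F₂ i j t) +
      ((k:ℂ)+1) * ((t:ℂ)^(k+1) * WMe W F₁ i j t) +
      (1:ℂ) * ((t:ℂ)^(k+2) * WMe W F₀ i j t) := by
  rcases k with _ | n <;>
  · funext t
    rw [rhs_entry]
    simp [map_pow, map_ofNat, Complex.conj_ofReal, Polynomial.derivative_X_pow]
    try push_cast
    try ring

lemma ptR2 : (fun t : ℝ => ((evalMat (((Polynomial.X)^2 : Polynomial ℂ) • 1) t * W t *
      (applyD F₂ F₁ F₀ (((Polynomial.X)^k : Polynomial ℂ) • 1) t)ᴴ : Matrix (Fin N) (Fin N) ℂ)) i j)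
    = fun t : ℝ => ((k:ℂ)*((k:ℂ)-1)) * ((t:ℂ)^k * WMe W F₂ i j t) +
      (k:ℂ) * ((t:ℂ)^(k+1) * WMe W F₁ i j t) +
      (1:ℂ) * ((t:ℂ)^(k+2) * WMe W F₀ i j t) := by
  rcases k with _ | _ | n <;>
  · funext t
    rw [rhs_entry]
    simp [map_pow, map_ofNat, Complex.conj_ofReal, Polynomial.derivative_X_pow]
    try push_cast
    try ring

end Pt

theorem stmt14 {N : ℕ} (a b : ℝ) (hab : a < b)
    (W : ℝ → Matrix (Fin N) (Fin N) ℂ)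
    (F₂ F₁ F₀ : Matrix (Fin N) (Fin N) (Polynomial ℂ))
    -- `W` is a weight matrix: positive definite a.e. on (a,b), measurable, finite moments
    (hWmeas : ∀ i j, Measurable fun t => W t i j)
    (hWpos : ∀ᵐ t ∂(volume.restrict (Set.Ioo a b)), (W t).PosDef)
    (hmom : ∀ n : ℕ, ∀ i j, IntervalIntegrable (fun t => (t : ℂ) ^ n * W t i j) volume a b)
    -- integrability of all integrands appearing in the symmetry condition
    (hint : ∀ p q : Matrix (Fin N) (Fin N) (Polynomial ℂ), ∀ i j,
      IntervalIntegrable (fun t => (applyD F₂ F₁ F₀ p t * W t * (evalMat q t)ᴴ) i j) volume a b ∧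
      IntervalIntegrable (fun t => (evalMat p t * W t * (applyD F₂ F₁ F₀ q t)ᴴ) i j) volume a b)
    -- symmetry of `D` with respect to `W`: ⟨PD, Q⟩_W = ⟨P, QD⟩_W
    (hsym : ∀ p q : Matrix (Fin N) (Fin N) (Polynomial ℂ), ∀ i j,
      (∫ t in a..b, (applyD F₂ F₁ F₀ p t * W t * (evalMat q t)ᴴ) i j) =
        ∫ t in a..b, (evalMat p t * W t * (applyD F₂ F₁ F₀ q t)ᴴ) i j) :
    ∀ᵐ t ∂(volume.restrict (Set.Ioo a b)), evalMat F₂ t * W t = W t * (evalMat F₂ t)ᴴ := by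
  have key : ∀ (i j : Fin N) (k : ℕ),
      (∫ t in a..b, (t:ℂ)^k * MWe W F₂ i j t) = ∫ t in a..b, (t:ℂ)^k * WMe W F₂ i j t := by
    intro i j k
    have E0 := hsym ((1:Polynomial ℂ) • 1) (((Polynomial.X)^(k+2) : Polynomial ℂ) • 1) i j
    have E1 := hsym ((Polynomial.X : Polynomial ℂ) • 1)
      (((Polynomial.X)^(k+1) : Polynomial ℂ) • 1) i j
    have E2 := hsym (((Polynomial.X)^2 : Polynomial ℂ) • 1)
      (((Polynomial.X)^k : Polynomial ℂ) • 1) i j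
    rw [ptL0, ptR0, canonL hmom F₂ F₁ F₀ i j, canonR hmom F₂ F₁ F₀ i j] at E0
    rw [ptL1, ptR1, canonL hmom F₂ F₁ F₀ i j, canonR hmom F₂ F₁ F₀ i j] at E1
    rw [ptL2, ptR2, canonL hmom F₂ F₁ F₀ i j, canonR hmom F₂ F₁ F₀ i j] at E2
    linear_combination (E0 - 2 * E1 + E2) / 2
  have hae : ∀ i j : Fin N, ∀ᵐ t ∂(volume.restrict (Set.Ioo a b)),
      MWe W F₂ i j t - WMe W F₂ i j t = 0 := by
    intro i j
    have hiM : IntervalIntegrable (fun t : ℝ => MWe W F₂ i j t) volume a b := by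
      have := intXMW hmom 0 F₂ i j
      simpa using this
    have hiW : IntervalIntegrable (fun t : ℝ => WMe W F₂ i j t) volume a b := by
      have := intXWM hmom 0 F₂ i j
      simpa using this
    apply moments_zero hab
    · have := (hiM.sub hiW).1
      exact (this.mono_set Set.Ioo_subset_Ioc_self)
    · intro n
      have hiM' : IntervalIntegrable (fun t : ℝ => (t:ℂ)^n * MWe W F₂ i j t) volume a b :=
        intXMW hmom n F₂ i j
      have hiW' : IntervalIntegrable (fun t : ℝ => (t:ℂ)^n * WMe W F₂ i j t) volume a b :=
        intXWM hmom n F₂ i j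
      have : (∫ t in Set.Ioo a b, (t:ℂ)^n * (MWe W F₂ i j t - WMe W F₂ i j t))
          = ∫ t in a..b, ((t:ℂ)^n * MWe W F₂ i j t - (t:ℂ)^n * WMe W F₂ i j t) := by
        rw [intervalIntegral.integral_of_le hab.le, ← MeasureTheory.integral_Ioc_eq_integral_Ioo]
        congr 1
        funext t
        ring
      rw [this, intervalIntegral.integral_sub hiM' hiW', key i j n, sub_self]
  have hall : ∀ᵐ t ∂(volume.restrict (Set.Ioo a b)), ∀ i j : Fin N,
      MWe W F₂ i j t - WMe W F₂ i j t = 0 := by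
    rw [MeasureTheory.ae_all_iff]
    intro i
    rw [MeasureTheory.ae_all_iff]
    exact hae i
  filter_upwards [hall] with t ht
  ext i j
  have h := ht i j
  rw [MWe, WMe, sub_eq_zero] at h
  exact h
end
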